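/- arXiv:2005.09277 — 6 statements merged into one kernel-verified Lean document; each statement's English description precedes it below -/
import Mathlib

section
/- Let A and B be msp-permutable subgroups of a finite group G with G = AB, and let p be the greatest prime dividing |G|. If A and B are both p-closed, then G is p-closed. -/
open Subgroup Pointwise

universe u

/-- Subgroups `X` and `Y` are *mutually permutable* if `UY = YU` for every subgroup
`U ≤ X` and `XV = VX` for every subgroup `V ≤ Y`. -/
def MutuallyPermutable {G : Type*} [Group G] (X Y : Subgroup G) : Prop :=
  (∀ U : Subgroup G, U ≤ X → (U : Set G) * (Y : Set G) = (Y : Set G) * (U : Set G)) ∧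
  (∀ V : Subgroup G, V ≤ Y → (X : Set G) * (V : Set G) = (V : Set G) * (X : Set G))

/-- `P` is a Sylow `p`-subgroup of the subgroup `H`: `P ≤ H`, `P` is a `p`-group and
`p` does not divide the index `[H : P]`. -/
def IsSylowSubgroupOf {G : Type*} [Group G] (p : ℕ) (P H : Subgroup G) : Prop :=
  P ≤ H ∧ IsPGroup p P ∧ Nat.Coprime p (P.relIndex H)

/-- Subgroups `A` and `B` are *msp-permutable* if `AB` is a subgroup of `G` and, for all
distinct primes `p ≠ q`, every Sylow `p`-subgroup of `A` and every Sylow `q`-subgroup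
of `B` are mutually permutable. -/
def MspPermutable {G : Type*} [Group G] (A B : Subgroup G) : Prop :=
  (∃ H : Subgroup G, (H : Set G) = (A : Set G) * (B : Set G)) ∧
  ∀ p q : ℕ, p.Prime → q.Prime → p ≠ q → ∀ P Q : Subgroup G,
    IsSylowSubgroupOf p P A → IsSylowSubgroupOf q Q B → MutuallyPermutable P Q

/-- `G` is `p`-closed: it has a normal Sylow `p`-subgroup. -/
def IsPClosed (p : ℕ) (G : Type*) [Group G] : Prop :=
  ∃ P : Sylow p G, (P : Subgroup G).Normal

/-!
Let `P` and `Q` be the normal Sylow `p`-subgroups of `A` and `B`. For a `q`-element `x` of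
`B` with `q ≠ p` we have `q < p`, and `P⟨x⟩` is a group of order `p^a q^b` whose Sylow
`q`-subgroup `⟨x⟩` is cyclic, so by Burnside's transfer theorem it has a normal `q`-complement,
namely `P`. Hence every Sylow `q`-subgroup of `B` normalizes `P`, and symmetrically for `A` and
`Q`; as a group is generated by its Sylow subgroups, `A` and `B` normalize `N = P ⊔ Q`, which is
therefore normal in `G = AB`. Conjugating inside `A` and `B` puts `P` and `Q` into one Sylow
subgroup of `G`, so `N` is a `p`-group, and `[G : N]` divides `[A : A ∩ N] [B : B ∩ N]`, which
is prime to `p`.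
-/

namespace Subgroup

variable {G : Type*} [Group G]

theorem coe_sup_of_coe_mul_comm {H K : Subgroup G} (hHK : (H : Set G) * K = K * H) :
    ((H ⊔ K : Subgroup G) : Set G) = H * K := by
  have hmul : (H : Set G) * K * (H * K) = H * K := by
    rw [mul_assoc, ← mul_assoc (K : Set G), ← hHK, mul_assoc, coe_mul_coe, ← mul_assoc,
      coe_mul_coe]
  have hinv : ((H : Set G) * K)⁻¹ = H * K := by
    rw [mul_inv_rev, inv_coe_set, inv_coe_set, hHK]
  rw [sup_eq_closure_mul]
  refine Set.Subset.antisymm (fun x hx => ?_) subset_closure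
  induction hx using closure_induction'' with
  | one => exact ⟨1, one_mem _, 1, one_mem _, mul_one 1⟩
  | mem _ hx => exact hx
  | inv_mem _ hx => exact hinv ▸ Set.inv_mem_inv.mpr hx
  | mul _ _ _ _ hx hy => exact hmul ▸ Set.mul_mem_mul hx hy

theorem card_sup_of_coe_mul_comm_of_coprime [Finite G] {H K : Subgroup G}
    (hHK : (H : Set G) * K = K * H) (hcop : (Nat.card H).Coprime (Nat.card K)) :
    Nat.card (H ⊔ K : Subgroup G) = Nat.card H * Nat.card K := by
  refine le_antisymm ?_ (Nat.le_of_dvd Nat.card_pos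
    (hcop.mul_dvd_of_dvd_of_dvd (card_dvd_of_le le_sup_left) (card_dvd_of_le le_sup_right)))
  rw [← SetLike.coe_sort_coe, coe_sup_of_coe_mul_comm hHK]
  exact Set.natCard_mul_le

theorem relIndex_eq_index_of_coe_mul_eq_univ {H K : Subgroup G}
    (hHK : (H : Set G) * (K : Set G) = Set.univ) : K.relIndex H = K.index := by
  have horbit : MulAction.orbit H ((1 : G) : G ⧸ K) = Set.univ := by
    refine Set.eq_univ_of_forall fun y => ?_
    induction y using QuotientGroup.induction_on with | H g => ?_
    obtain ⟨h, hh, k, hk, rfl⟩ := hHK.symm ▸ Set.mem_univ g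
    refine ⟨⟨h, hh⟩, ?_⟩
    change ((h : G) • ((1 : G) : G ⧸ K)) = _
    rw [MulAction.Quotient.smul_coe, smul_eq_mul, mul_one, QuotientGroup.eq]
    simpa using hk
  have hstab : MulAction.stabilizer H ((1 : G) : G ⧸ K) = K.subgroupOf H := by
    ext h
    change ((h : G) • ((1 : G) : G ⧸ K)) = _ ↔ _
    rw [MulAction.Quotient.smul_coe, smul_eq_mul, mul_one, QuotientGroup.eq, mem_subgroupOf]
    simp
  rw [relIndex, ← hstab, MulAction.index_stabilizer, horbit, Set.ncard_univ, index_eq_card]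

theorem index_dvd_relIndex_mul_relIndex_of_coe_mul_eq_univ {A B N : Subgroup G} [N.Normal]
    (hAB : (A : Set G) * (B : Set G) = Set.univ) : N.index ∣ N.relIndex A * N.relIndex B := by
  have hAB' : (A : Set G) * ((B ⊔ N : Subgroup G) : Set G) = Set.univ :=
    Set.eq_univ_of_univ_subset <|
      hAB ▸ Set.mul_subset_mul_left (SetLike.coe_subset_coe.mpr le_sup_left)
  rw [← relIndex_mul_index (le_sup_right : N ≤ B ⊔ N), relIndex_sup_right,
    ← relIndex_eq_index_of_coe_mul_eq_univ hAB', mul_comm]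
  exact mul_dvd_mul_right (relIndex_dvd_of_le_left A le_sup_right) _

theorem normal_of_coe_mul_eq_univ {A B N : Subgroup G}
    (hAB : (A : Set G) * (B : Set G) = Set.univ) (hA : A ≤ normalizer (N : Set G))
    (hB : B ≤ normalizer (N : Set G)) : N.Normal :=
  normalizer_eq_top_iff.mp <| eq_top_iff.mpr fun g _ => by
    obtain ⟨a, ha, b, hb, rfl⟩ := hAB.symm ▸ Set.mem_univ g
    exact mul_mem (hA ha) (hB hb)

theorem subgroupOf_map_subtype_self {K : Subgroup G} (H : Subgroup K) :
    (H.map K.subtype).subgroupOf K = H :=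
  comap_map_eq_self_of_injective K.subtype_injective H

theorem relIndex_map_subtype {K : Subgroup G} (H : Subgroup K) :
    (H.map K.subtype).relIndex K = H.index := by
  rw [relIndex, subgroupOf_map_subtype_self]

theorem le_normalizer_map_subtype {K : Subgroup G} (H : Subgroup K) [H.Normal] :
    K ≤ normalizer (H.map K.subtype : Set G) :=
  have : ((H.map K.subtype).subgroupOf K).Normal := (subgroupOf_map_subtype_self H).symm ▸ ‹_›
  le_normalizer_of_normal_subgroupOf (map_subtype_le H)

theorem eq_top_of_forall_exists_sylow_le [Finite G] {M : Subgroup G}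
    (h : ∀ q, q.Prime → q ∣ Nat.card G → ∃ S : Sylow q G, (S : Subgroup G) ≤ M) :
    M = ⊤ := by
  refine eq_top_of_card_eq M (Nat.dvd_antisymm (card_subgroup_dvd_card M) ?_)
  refine (Nat.factorization_prime_le_iff_dvd Nat.card_pos.ne' Nat.card_pos.ne').mp
    fun q hq => ?_
  by_cases hqG : q ∣ Nat.card G
  · have := Fact.mk hq
    obtain ⟨S, hSM⟩ := h q hq hqG
    have hdvd := card_dvd_of_le hSM
    rwa [S.card_eq_multiplicity, hq.pow_dvd_iff_le_factorization Nat.card_pos.ne'] at hdvd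
  · simp [Nat.factorization_eq_zero_of_not_dvd hqG]

theorem le_of_forall_exists_sylow_map_le [Finite G] {K M : Subgroup G}
    (h : ∀ q, q.Prime → q ∣ Nat.card K →
      ∃ S : Sylow q K, (S : Subgroup K).map K.subtype ≤ M) : K ≤ M := by
  rw [← subgroupOf_eq_top]
  refine eq_top_of_forall_exists_sylow_le fun q hq hqK => ?_
  obtain ⟨S, hS⟩ := h q hq hqK
  exact ⟨S, fun s hs => hS (mem_map_of_mem _ hs)⟩

section TwoPrimes

variable {p q : ℕ} [hp : Fact p.Prime] [hq : Fact q.Prime]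

theorem normal_of_card_mul_eq_of_isCyclic [Finite G] (hqp : q < p) {P Q : Subgroup G}
    (hP : IsPGroup p P) (hQ : IsPGroup q Q) [IsCyclic Q]
    (hcard : Nat.card P * Nat.card Q = Nat.card G) :
    P.Normal := by
  have hPidx : P.index = Nat.card Q := by
    rw [← Nat.mul_left_cancel_iff (Nat.card_pos (α := P)), card_mul_index, hcard]
  have hQidx : Q.index = Nat.card P := by
    rw [← Nat.mul_left_cancel_iff (Nat.card_pos (α := Q)), card_mul_index, ← hcard, mul_comm]
  rcases eq_or_ne (Nat.card Q) 1 with hQ1 | hQ1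
  · exact normal_of_index_eq_one (hPidx.trans hQ1)
  obtain ⟨n, hn⟩ := hP.exists_card_eq
  obtain ⟨m, hm⟩ := hQ.exists_card_eq
  have hm0 : m ≠ 0 := by rintro rfl; exact hQ1 hm
  have eq_of_dvd_pow {r s k : ℕ} (hr : r.Prime) (hs : s.Prime) (h : r ∣ s ^ k) : r = s :=
    (Nat.prime_dvd_prime_iff_eq hr hs).mp (hr.dvd_of_dvd_pow h)
  have hmin : (Nat.card G).minFac = q := by
    have hqG : q ∣ Nat.card G := hcard ▸ hm ▸ (dvd_pow_self q hm0).mul_left _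
    have hG1 : Nat.card G ≠ 1 := fun h => hq.out.one_lt.ne' (Nat.dvd_one.mp (h ▸ hqG))
    have hr := Nat.minFac_prime hG1
    refine le_antisymm (Nat.minFac_le_of_dvd hq.out.two_le hqG) ?_
    have hdvd : (Nat.card G).minFac ∣ p ^ n * q ^ m := hn ▸ hm ▸ hcard ▸ Nat.minFac_dvd _
    rcases hr.dvd_mul.mp hdvd with h | h
    · exact (eq_of_dvd_pow hr hp.out h).ge.trans' hqp.le
    · exact (eq_of_dvd_pow hr hq.out h).ge
  let SQ : Sylow q G := hQ.toSylow (by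
    rw [hQidx, hn]; exact fun h => hqp.ne (eq_of_dvd_pow hq.out hp.out h))
  let SP : Sylow p G := hP.toSylow (by
    rw [hPidx, hm]; exact fun h => hqp.ne' (eq_of_dvd_pow hp.out hq.out h))
  have hK := IsCyclic.isComplement' hmin (P := SQ) ‹IsCyclic Q›
  set K := (MonoidHom.transferSylow SQ _).ker
  have hKcard : Nat.card K = Nat.card P := hK.index_eq_card.symm.trans hQidx
  have hKP : K ≤ P := (IsPGroup.of_card (hKcard.trans hn)).le_sylow_of_normal SP
  exact eq_of_le_of_card_ge hKP hKcard.ge ▸ inferInstance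

theorem mem_normalizer_of_coe_mul_zpowers_comm [Finite G] (hqp : q < p) {R : Subgroup G}
    (hR : IsPGroup p R) {x : G} (hx : IsPGroup q (zpowers x))
    (hRx : (R : Set G) * zpowers x = zpowers x * R) : x ∈ normalizer (R : Set G) := by
  have hRH : R ≤ R ⊔ zpowers x := le_sup_left
  have hXH : zpowers x ≤ R ⊔ zpowers x := le_sup_right
  have hcard := card_sup_of_coe_mul_comm_of_coprime hRx
    (hR.coprime_card_of_ne p q hqp.ne' R (zpowers x) hx)
  have : IsCyclic ((zpowers x).subgroupOf (R ⊔ zpowers x)) :=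
    isCyclic_of_surjective (subgroupOfEquivOfLe hXH).symm.toMonoidHom
      (subgroupOfEquivOfLe hXH).symm.surjective
  have : (R.subgroupOf (R ⊔ zpowers x)).Normal :=
    normal_of_card_mul_eq_of_isCyclic hqp (hR.of_equiv (subgroupOfEquivOfLe hRH).symm)
      (hx.of_equiv (subgroupOfEquivOfLe hXH).symm) (by
        rw [Nat.card_congr (subgroupOfEquivOfLe hRH).toEquiv,
          Nat.card_congr (subgroupOfEquivOfLe hXH).toEquiv, hcard])
  exact le_normalizer_of_normal_subgroupOf hRH (hXH (mem_zpowers x))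

theorem le_normalizer_of_forall_coe_mul_comm [Finite G] (hqp : q < p) {R X : Subgroup G}
    (hR : IsPGroup p R) (hX : IsPGroup q X)
    (hRX : ∀ V ≤ X, (R : Set G) * V = V * R) : X ≤ normalizer (R : Set G) := fun x hx =>
  have hxX : zpowers x ≤ X := zpowers_le.mpr hx
  mem_normalizer_of_coe_mul_zpowers_comm hqp hR (hX.to_le hxX) (hRX _ hxX)

end TwoPrimes

theorem le_normalizer_sup_of_forall_sylow [Finite G] {p : ℕ} [Fact p.Prime] {K L : Subgroup G}
    (P : Sylow p K) [(P : Subgroup K).Normal]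
    (hL : ∀ q, q.Prime → q ≠ p → q ∣ Nat.card K →
      ∀ S : Sylow q K, (S : Subgroup K).map K.subtype ≤ normalizer (L : Set G)) :
    K ≤ normalizer (((P : Subgroup K).map K.subtype ⊔ L : Subgroup G) : Set G) := by
  refine le_of_forall_exists_sylow_map_le fun q hq hqK => ?_
  rcases eq_or_ne q p with rfl | hqp
  · exact ⟨P, le_sup_left.trans le_normalizer⟩
  · have := Fact.mk hq
    exact ⟨default, fun x hx => normalizer_inf_normalizer_le_normalizer_sup _ _
      ⟨le_normalizer_map_subtype _ (map_subtype_le _ hx), hL q hq hqp hqK default hx⟩⟩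

end Subgroup

theorem Sylow.le_smul_of_le_of_mem_normalizer {p : ℕ} {G : Type*} [Group G] {P : Subgroup G}
    {S : Sylow p G} (hPS : P ≤ S) {g : G} (hg : g ∈ normalizer (P : Set G)) :
    P ≤ ↑(g • S) := by
  intro y hy
  rw [Sylow.coe_subgroup_smul, mem_pointwise_smul_iff_inv_smul_mem, ← map_inv, MulAut.smul_def,
    MulAut.conj_apply, inv_inv]
  exact hPS ((mem_normalizer_iff''.mp hg y).mp hy)

theorem IsPGroup.sup_of_coe_mul_eq_univ {p : ℕ} {G : Type*} [Group G] [Finite G] [Fact p.Prime]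
    {A B P Q : Subgroup G} (hAB : (A : Set G) * (B : Set G) = Set.univ) (hP : IsPGroup p P)
    (hQ : IsPGroup p Q) (hAP : A ≤ normalizer (P : Set G)) (hBQ : B ≤ normalizer (Q : Set G)) :
    IsPGroup p (P ⊔ Q : Subgroup G) := by
  obtain ⟨S, hPS⟩ := hP.exists_le_sylow
  obtain ⟨T, hQT⟩ := hQ.exists_le_sylow
  obtain ⟨g, rfl⟩ := MulAction.exists_smul_eq G S T
  obtain ⟨a, ha, b, hb, hab⟩ := hAB.symm ▸ Set.mem_univ g⁻¹
  have hS : a⁻¹ • S = b • g • S := by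
    rw [smul_smul, show b * g = a⁻¹ by rw [eq_inv_mul_of_mul_eq hab]; group]
  refine (a⁻¹ • S).isPGroup'.to_le (sup_le ?_ ?_)
  · exact Sylow.le_smul_of_le_of_mem_normalizer hPS (hAP (inv_mem ha))
  · exact hS ▸ Sylow.le_smul_of_le_of_mem_normalizer hQT (hBQ hb)

theorem Sylow.isSylowSubgroupOf_map_subtype {G : Type*} [Group G] [Finite G] {q : ℕ}
    [Fact q.Prime] {K : Subgroup G} (S : Sylow q K) :
    IsSylowSubgroupOf q ((S : Subgroup K).map K.subtype) K :=
  ⟨map_subtype_le _, S.2.map _, by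
    rw [relIndex_map_subtype]
    exact (Nat.Prime.coprime_iff_not_dvd Fact.out).mpr S.not_dvd_index⟩

theorem Sylow.not_dvd_relIndex_of_map_subtype_le {G : Type*} [Group G] [Finite G] {p : ℕ}
    [Fact p.Prime] {K N : Subgroup G} (S : Sylow p K)
    (hSN : (S : Subgroup K).map K.subtype ≤ N) : ¬ p ∣ N.relIndex K := fun hdvd =>
  S.not_dvd_index <|
    relIndex_map_subtype (S : Subgroup K) ▸ hdvd.trans (relIndex_dvd_of_le_left K hSN)

section MspPermutable

variable {G : Type*} [Group G] [Finite G] {A B : Subgroup G} {p q : ℕ} [hp : Fact p.Prime]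
  [hq : Fact q.Prime]

theorem MspPermutable.map_sylow_left_le_normalizer (h : MspPermutable A B) (hqp : q < p)
    (S : Sylow q A) (T : Sylow p B) :
    (S : Subgroup A).map A.subtype ≤ normalizer ((T : Subgroup B).map B.subtype : Set G) :=
  le_normalizer_of_forall_coe_mul_comm hqp (T.2.map _) (S.2.map _) fun V hV =>
    ((h.2 q p hq.out hp.out hqp.ne _ _ S.isSylowSubgroupOf_map_subtype
      T.isSylowSubgroupOf_map_subtype).1 V hV).symm

theorem MspPermutable.map_sylow_right_le_normalizer (h : MspPermutable A B) (hqp : q < p)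
    (S : Sylow p A) (T : Sylow q B) :
    (T : Subgroup B).map B.subtype ≤ normalizer ((S : Subgroup A).map A.subtype : Set G) :=
  le_normalizer_of_forall_coe_mul_comm hqp (S.2.map _) (T.2.map _) fun V hV =>
    (h.2 p q hp.out hq.out hqp.ne' _ _ S.isSylowSubgroupOf_map_subtype
      T.isSylowSubgroupOf_map_subtype).2 V hV

end MspPermutable

theorem pClosed_of_msp_permutable_product_general {G : Type u} [Group G] [Finite G]
    (A B : Subgroup G) (h : MspPermutable A B)
    (hG : (A : Set G) * (B : Set G) = Set.univ)
    (p : ℕ) (hp : p.Prime)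
    (hmax : ∀ q : ℕ, q.Prime → q ∣ Nat.card G → q ≤ p)
    (hA : IsPClosed p A) (hB : IsPClosed p B) : IsPClosed p G := by
  have := Fact.mk hp
  obtain ⟨SA, hSA⟩ := hA
  obtain ⟨SB, hSB⟩ := hB
  set P := (SA : Subgroup A).map A.subtype
  set Q := (SB : Subgroup B).map B.subtype
  have hlt {K : Subgroup G} (q : ℕ) (hq : q.Prime) (hqp : q ≠ p) (hqK : q ∣ Nat.card K) :
      q < p :=
    (hmax q hq (hqK.trans (card_subgroup_dvd_card K))).lt_of_ne hqp
  have hAN : A ≤ normalizer ((P ⊔ Q : Subgroup G) : Set G) :=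
    le_normalizer_sup_of_forall_sylow SA fun q hq hqp hqK S =>
      have := Fact.mk hq
      h.map_sylow_left_le_normalizer (hlt q hq hqp hqK) S SB
  have hBN : B ≤ normalizer ((P ⊔ Q : Subgroup G) : Set G) := sup_comm P Q ▸
    le_normalizer_sup_of_forall_sylow SB fun q hq hqp hqK S =>
      have := Fact.mk hq
      h.map_sylow_right_le_normalizer (hlt q hq hqp hqK) SA S
  have hN : (P ⊔ Q).Normal := normal_of_coe_mul_eq_univ hG hAN hBN
  have hNp : IsPGroup p (P ⊔ Q : Subgroup G) := IsPGroup.sup_of_coe_mul_eq_univ hG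
    (SA.2.map _) (SB.2.map _) (le_normalizer_map_subtype _) (le_normalizer_map_subtype _)
  have hindex : ¬ p ∣ (P ⊔ Q).index := fun hdvd => by
    rcases hp.dvd_mul.mp (hdvd.trans (index_dvd_relIndex_mul_relIndex_of_coe_mul_eq_univ hG))
      with hpA | hpB
    · exact SA.not_dvd_relIndex_of_map_subtype_le le_sup_left hpA
    · exact SB.not_dvd_relIndex_of_map_subtype_le le_sup_right hpB
  exact ⟨hNp.toSylow hindex, hN⟩

/-- If `G = AB` with `A`, `B` msp-permutable and `p`-closed, where `p` is the greatest
prime dividing `|G|`, then `G` is `p`-closed. -/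
theorem pClosed_of_msp_permutable_product {G : Type u} [Group G] [Finite G]
    (A B : Subgroup G) (h : MspPermutable A B)
    (hG : (A : Set G) * (B : Set G) = Set.univ)
    (p : ℕ) (hp : p.Prime) (hdvd : p ∣ Nat.card G)
    (hmax : ∀ q : ℕ, q.Prime → q ∣ Nat.card G → q ≤ p)
    (hA : IsPClosed p A) (hB : IsPClosed p B) : IsPClosed p G :=
  pClosed_of_msp_permutable_product_general A B h hG p hp hmax hA hB
end

section
/- Let A and B be msp-permutable subgroups of a finite group G with G = AB, and let N be a normal subgroup of G. Then G/N = (AN/N)(BN/N) is the product of the msp-permutable subgroups AN/N and BN/N of G/N. -/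
/-!
A homomorphism `f` carries products of subgroups to products of their images, so it carries
permuting pairs of subgroups to permuting pairs, and every subgroup of `f(X)` is the image of a
subgroup of `X`; hence mutual permutability passes to images. Every Sylow `p`-subgroup `P'` of
`f(A)` is the image of a Sylow `p`-subgroup of `A`: a Sylow `p`-subgroup of `A ∩ f⁻¹(P')` maps
into the `p`-group `P'` with index dividing its own index, which is prime to `p`. Applying this
to `G → G/N` gives the theorem.
-/

open Subgroup Pointwise

universe u

variable {G H : Type*} [Group G] [Group H]

namespace Subgroup

theorem relIndex_map_map_dvd (f : G →* H) {K L : Subgroup G} (hKL : K ≤ L) :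
    (K.map f).relIndex (L.map f) ∣ K.relIndex L := by
  have hmap : (K.subgroupOf L).map (f.subgroupMap L) = (K.map f).subgroupOf (L.map f) := by
    ext ⟨y, hy⟩
    simp only [mem_map, mem_subgroupOf, Subtype.exists, Subtype.ext_iff,
      MonoidHom.subgroupMap_apply_coe]
    exact ⟨fun ⟨x, _, hx, hxy⟩ => ⟨x, hx, hxy⟩, fun ⟨x, hx, hxy⟩ => ⟨x, hKL hx, hx, hxy⟩⟩
  rw [relIndex, relIndex, ← hmap]
  exact index_map_dvd _ (f.subgroupMap_surjective L)

theorem map_inf_comap_eq_of_le_map (f : G →* H) {X : Subgroup G} {U : Subgroup H}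
    (hU : U ≤ X.map f) : (X ⊓ U.comap f).map f = U := by
  refine le_antisymm (map_le_iff_le_comap.mpr inf_le_right) fun y hy => ?_
  obtain ⟨x, hx, rfl⟩ := hU hy
  exact ⟨x, ⟨hx, hy⟩, rfl⟩

theorem forall_le_map_mul_comm_of_forall_le_mul_comm (f : G →* H) {X Y : Subgroup G}
    (h : ∀ U ≤ X, (U : Set G) * Y = Y * U) :
    ∀ U ≤ X.map f, (U : Set H) * (Y.map f : Set H) = (Y.map f : Set H) * U := by
  intro U hU
  rw [← map_inf_comap_eq_of_le_map f hU, coe_map, coe_map, ← Set.image_mul, ← Set.image_mul,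
    h _ inf_le_left]

end Subgroup

theorem MutuallyPermutable.map {X Y : Subgroup G} (h : MutuallyPermutable X Y) (f : G →* H) :
    MutuallyPermutable (X.map f) (Y.map f) :=
  ⟨forall_le_map_mul_comm_of_forall_le_mul_comm f h.1, fun V hV =>
    (forall_le_map_mul_comm_of_forall_le_mul_comm f (fun V hV => (h.2 V hV).symm) V hV).symm⟩

section Sylow

variable [Finite G]

theorem exists_isSylowSubgroupOf (p : ℕ) [Fact p.Prime] (K : Subgroup G) :
    ∃ P, IsSylowSubgroupOf p P K := by
  obtain ⟨S⟩ : Nonempty (Sylow p K) := inferInstance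
  refine ⟨S.1.map K.subtype, map_subtype_le _, S.2.map _, ?_⟩
  rw [relIndex, subgroupOf, comap_map_eq_self_of_injective K.subtype_injective]
  exact (Nat.Prime.coprime_iff_not_dvd Fact.out).mpr S.not_dvd_index

variable {p : ℕ} [Fact p.Prime]

theorem IsSylowSubgroupOf.map_eq_map {P K : Subgroup G} (hP : IsSylowSubgroupOf p P K)
    (f : G →* H) (hK : IsPGroup p (K.map f)) : P.map f = K.map f := by
  obtain ⟨hPK, -, hcop⟩ := hP
  have : Finite (K.map f) := Finite.of_surjective _ (f.subgroupMap_surjective K)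
  obtain ⟨n, hn⟩ := hK.index ((P.map f).subgroupOf (K.map f))
  have hdvd : p ^ n ∣ P.relIndex K := hn ▸ relIndex_map_map_dvd f hPK
  have hn1 : (P.map f).relIndex (K.map f) = 1 := hn.trans ((hcop.pow_left n).eq_one_of_dvd hdvd)
  exact le_antisymm (map_mono hPK) (relIndex_eq_one.mp hn1)

theorem IsSylowSubgroupOf.exists_map_eq {A : Subgroup G} {P' : Subgroup H} (f : G →* H)
    (hP' : IsSylowSubgroupOf p P' (A.map f)) :
    ∃ P, IsSylowSubgroupOf p P A ∧ P.map f = P' := by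
  obtain ⟨hP'A, hP'p, hcop⟩ := hP'
  have hK := map_inf_comap_eq_of_le_map f hP'A
  obtain ⟨P, hP⟩ := exists_isSylowSubgroupOf p (A ⊓ P'.comap f)
  refine ⟨P, ⟨hP.1.trans inf_le_left, hP.2.1, ?_⟩, (hP.map_eq_map f (by rwa [hK])).trans hK⟩
  rw [← relIndex_mul_relIndex _ _ _ hP.1 inf_le_left, inf_relIndex_left, relIndex_comap]
  exact hP.2.2.mul_right hcop

end Sylow

theorem MspPermutable.map [Finite G] {A B : Subgroup G} (h : MspPermutable A B) (f : G →* H) :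
    MspPermutable (A.map f) (B.map f) := by
  obtain ⟨⟨K, hK⟩, hsyl⟩ := h
  refine ⟨⟨K.map f, by rw [coe_map, hK, Set.image_mul]; rfl⟩, ?_⟩
  intro p q hp hq hpq P' Q' hP' hQ'
  have := Fact.mk hp
  have := Fact.mk hq
  obtain ⟨P, hP, rfl⟩ := hP'.exists_map_eq f
  obtain ⟨Q, hQ, rfl⟩ := hQ'.exists_map_eq f
  exact (hsyl p q hp hq hpq P Q hP hQ).map f

/-- If `G = AB` with `A`, `B` msp-permutable and `N ⊴ G`, then
`G/N = (AN/N)(BN/N)` is the product of the msp-permutable subgroups `AN/N`, `BN/N`. -/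
theorem msp_permutable_quotient {G : Type u} [Group G] [Finite G]
    (A B : Subgroup G) (h : MspPermutable A B)
    (hG : (A : Set G) * (B : Set G) = Set.univ)
    (N : Subgroup G) [N.Normal] :
    ((A.map (QuotientGroup.mk' N) : Set (G ⧸ N)) *
        (B.map (QuotientGroup.mk' N) : Set (G ⧸ N)) = Set.univ) ∧
    MspPermutable (A.map (QuotientGroup.mk' N)) (B.map (QuotientGroup.mk' N)) := by
  refine ⟨?_, h.map _⟩
  rw [coe_map, coe_map, ← Set.image_mul, hG,
    Set.image_univ_of_surjective (QuotientGroup.mk'_surjective N)]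
end

section
/- Let A and B be msp-permutable subgroups of a finite group G with G = AB, and let H be a subgroup of G with A ≤ H ≤ G. Then H = A(H ∩ B) and A and H ∩ B are msp-permutable subgroups of H. -/
open Subgroup Pointwise

universe u

/-
Proof idea: by Dedekind's modular law, A(H ∩ B) = AB ∩ H = H. A Sylow q-subgroup Q of H ∩ B
lies in a Sylow q-subgroup Q₁ of B, and Q₁ ∩ H = Q because Q is already maximal among the
q-subgroups of H ∩ B. For a subgroup U of a Sylow subgroup of A we have U ≤ H, so the modular
law turns U Q₁ = Q₁ U into U Q = U Q₁ ∩ H = Q₁ U ∩ H = Q U.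
-/

section Sylow

variable {G : Type*} [Group G] {p : ℕ} [Fact p.Prime]

theorem IsPGroup.exists_isSylowSubgroupOf_le {Q L : Subgroup G} [Finite G]
    (hQ : IsPGroup p Q) (hQL : Q ≤ L) : ∃ Q₁, IsSylowSubgroupOf p Q₁ L ∧ Q ≤ Q₁ := by
  obtain ⟨S, hS⟩ := (hQ.comap_subtype (K := L)).exists_le_sylow
  refine ⟨(S : Subgroup L).map L.subtype, ⟨map_subtype_le _, S.2.map _, ?_⟩, ?_⟩
  · rw [relIndex, subgroupOf, comap_map_eq_self_of_injective L.subtype_injective]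
    exact (Nat.Prime.coprime_iff_not_dvd Fact.out).mpr S.not_dvd_index
  · simpa [subgroupOf_map_subtype, inf_eq_left.mpr hQL] using map_mono (f := L.subtype) hS

theorem IsSylowSubgroupOf.eq_of_le [Finite G] {Q R K : Subgroup G}
    (hQ : IsSylowSubgroupOf p Q K) (hQR : Q ≤ R) (hRK : R ≤ K) (hR : IsPGroup p R) : R = Q := by
  obtain ⟨n, hn⟩ := hR.index (Q.subgroupOf R)
  have hdvd : p ^ n ∣ Q.relIndex K :=
    hn ▸ ⟨R.relIndex K, (relIndex_mul_relIndex Q R K hQR hRK).symm⟩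
  have hone : Q.relIndex R = 1 := hn.trans ((hQ.2.2.pow_left n).eq_one_of_dvd hdvd)
  exact le_antisymm (relIndex_eq_one.mp hone) hQR

theorem IsSylowSubgroupOf.exists_inf_eq [Finite G] {Q H B : Subgroup G}
    (hQ : IsSylowSubgroupOf p Q (H ⊓ B)) :
    ∃ Q₁, IsSylowSubgroupOf p Q₁ B ∧ Q₁ ⊓ H = Q := by
  obtain ⟨Q₁, hQ₁, hQQ₁⟩ := hQ.2.1.exists_isSylowSubgroupOf_le (hQ.1.trans inf_le_right)
  refine ⟨Q₁, hQ₁, hQ.eq_of_le (le_inf hQQ₁ (hQ.1.trans inf_le_left)) ?_ ?_⟩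
  · exact le_inf inf_le_right (inf_le_left.trans hQ₁.1)
  · exact hQ₁.2.1.to_le inf_le_left

end Sylow

theorem MutuallyPermutable.inf_right_of_le {G : Type*} [Group G] {X Y K : Subgroup G}
    (h : MutuallyPermutable X Y) (hXK : X ≤ K) : MutuallyPermutable X (Y ⊓ K) := by
  refine ⟨fun U hU => ?_, fun V hV => h.2 V (hV.trans inf_le_left)⟩
  have hUK : U ≤ K := hU.trans hXK
  rw [mul_inf_assoc U Y K hUK, inf_comm, inf_mul_assoc K Y U hUK, h.1 U hU, Set.inter_comm]

/-- If `G = AB` with `A`, `B` msp-permutable and `A ≤ H ≤ G`, then `H = A(H ∩ B)` is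
the product of the msp-permutable subgroups `A` and `H ∩ B`. -/
theorem msp_permutable_intermediate {G : Type u} [Group G] [Finite G]
    (A B : Subgroup G) (h : MspPermutable A B)
    (hG : (A : Set G) * (B : Set G) = Set.univ)
    (H : Subgroup G) (hAH : A ≤ H) :
    (A : Set G) * ((H ⊓ B : Subgroup G) : Set G) = (H : Set G) ∧
    MspPermutable A (H ⊓ B) := by
  have hprod : (A : Set G) * ((H ⊓ B : Subgroup G) : Set G) = (H : Set G) := by
    rw [inf_comm, mul_inf_assoc A B H hAH, hG, Set.univ_inter]
  refine ⟨hprod, ⟨H, hprod.symm⟩, fun p q hp hq hpq P Q hP hQ => ?_⟩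
  have := Fact.mk hq
  obtain ⟨Q₁, hQ₁, rfl⟩ := hQ.exists_inf_eq
  exact (h.2 p q hp hq hpq P Q₁ hP hQ₁).inf_right_of_le (hP.1.trans hAH)
end

section
/- Let G = G₁G₂ be the product of msp-permutable subgroups G₁ and G₂ of a finite group G. If a Sylow p-subgroup P of G is normal in G and abelian, then P ∩ G_i is normal in G for each i ∈ {1,2}. -/
/-!
Let `X = P ⊓ Gᵢ` and let `B` be the other factor. `Gᵢ` normalizes `X` because `P` is normal, so
as `G = G₁G₂` it suffices that `B` does, and `B` is generated by its Sylow subgroups. A Sylow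
`p`-subgroup of `B` lies in the abelian group `P` and centralizes `X`. A Sylow `q`-subgroup `Q` of
`B` with `q ≠ p` permutes with `X`, a Sylow `p`-subgroup of `Gᵢ`; writing `gx = yk` with `g ∈ Q`,
`x, y ∈ X`, `k ∈ Q` gives `gxg⁻¹ = y (kg⁻¹)` with `kg⁻¹ ∈ P ⊓ Q = ⊥`, so `Q` normalizes `X`.
-/

open Subgroup Pointwise

universe u

section Group

variable {G : Type*} [Group G]

theorem Subgroup.sup_eq_top_of_mul_eq_univ {A B : Subgroup G}
    (h : (A : Set G) * (B : Set G) = Set.univ) : A ⊔ B = ⊤ := by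
  rw [eq_top_iff, ← SetLike.coe_subset_coe, coe_top, ← h]
  exact mul_subset (SetLike.coe_subset_coe.2 le_sup_left) (SetLike.coe_subset_coe.2 le_sup_right)

theorem Subgroup.le_normalizer_of_conj_mem {X Q : Subgroup G}
    (h : ∀ g ∈ Q, ∀ x ∈ X, g * x * g⁻¹ ∈ X) : Q ≤ normalizer (X : Set G) := fun g hg =>
  mem_normalizer_iff.2 fun x =>
    ⟨h g hg x, fun hx => by simpa [mul_assoc] using h g⁻¹ (inv_mem hg) _ hx⟩

theorem Subgroup.le_normalizer_of_mul_comm {X K Q : Subgroup G} [hK : K.Normal] (hXK : X ≤ K)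
    (hKQ : Disjoint K Q) (hXQ : (X : Set G) * (Q : Set G) = (Q : Set G) * (X : Set G)) :
    Q ≤ normalizer (X : Set G) := by
  refine le_normalizer_of_conj_mem fun g hg x hx => ?_
  obtain ⟨y, hy, k, hk, hyk⟩ : g * x ∈ (X : Set G) * (Q : Set G) := hXQ ▸ Set.mul_mem_mul hg hx
  have hconj : g * x * g⁻¹ = y * (k * g⁻¹) := by rw [← hyk, mul_assoc]
  have hkK : k * g⁻¹ ∈ K := by
    have : k * g⁻¹ = y⁻¹ * (g * x * g⁻¹) := by rw [hconj]; group
    rw [this]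
    exact mul_mem (inv_mem (hXK hy)) (hK.conj_mem x (hXK hx) g)
  have hk1 : k * g⁻¹ = 1 :=
    Subgroup.mem_bot.1 (hKQ.le_bot (mem_inf.2 ⟨hkK, mul_mem hk (inv_mem hg)⟩))
  rwa [hconj, hk1, mul_one]

end Group

section Finite

variable {G : Type*} [Group G] [Finite G]

theorem Subgroup.le_of_forall_sylow_map_le {H N : Subgroup G}
    (h : ∀ (p : ℕ) [Fact p.Prime] (Q : Sylow p H), (Q : Subgroup H).map H.subtype ≤ N) :
    H ≤ N := by
  rw [← subgroupOf_eq_top, ← index_eq_one, Nat.eq_one_iff_not_exists_prime_dvd]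
  intro p hp hdvd
  have := Fact.mk hp
  obtain ⟨Q⟩ : Nonempty (Sylow p H) := inferInstance
  have hQN : (Q : Subgroup H) ≤ N.subgroupOf H := map_le_iff_le_comap.1 (h p Q)
  exact Q.not_dvd_index (hdvd.trans (index_dvd_of_le hQN))

theorem IsPGroup.le_of_normal_sylow {p : ℕ} [Fact p.Prime] {Q : Subgroup G} (hQ : IsPGroup p Q)
    (P : Sylow p G) [hP : (P : Subgroup G).Normal] : Q ≤ P := by
  obtain ⟨R, hQR⟩ := hQ.exists_le_sylow
  have := Sylow.unique_of_normal P hP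
  rwa [Subsingleton.elim R P] at hQR

theorem Sylow.isSylowSubgroupOf_map_subtype_s11 {p : ℕ} [Fact p.Prime] {B : Subgroup G}
    (Q : Sylow p B) : IsSylowSubgroupOf p ((Q : Subgroup B).map B.subtype) B := by
  refine ⟨map_subtype_le _, Q.isPGroup'.map _, ?_⟩
  rw [relIndex, ← comap_subtype, comap_map_eq_self_of_injective B.subtype_injective]
  exact (Fact.out : p.Prime).coprime_iff_not_dvd.2 Q.not_dvd_index

theorem Sylow.isSylowSubgroupOf_inf {p : ℕ} [hp : Fact p.Prime] (P : Sylow p G)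
    [(P : Subgroup G).Normal] (A : Subgroup G) :
    IsSylowSubgroupOf p ((P : Subgroup G) ⊓ A) A := by
  refine ⟨inf_le_right, P.isPGroup'.to_inf_left, hp.out.coprime_iff_not_dvd.2 fun hdvd => ?_⟩
  rw [inf_relIndex_right] at hdvd
  exact P.not_dvd_index (hdvd.trans (relIndex_dvd_index_of_normal _ _))

theorem Sylow.inf_normal_of_sup_eq_top {p : ℕ} [Fact p.Prime] (P : Sylow p G)
    [(P : Subgroup G).Normal] (hPcomm : (P : Subgroup G) ≤ centralizer (P : Set G))
    {A B : Subgroup G} (hAB : A ⊔ B = ⊤)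
    (hperm : ∀ q : ℕ, q.Prime → q ≠ p → ∀ Q : Subgroup G, IsSylowSubgroupOf q Q B →
      (((P : Subgroup G) ⊓ A : Subgroup G) : Set G) * (Q : Set G) =
        (Q : Set G) * (((P : Subgroup G) ⊓ A : Subgroup G) : Set G)) :
    ((P : Subgroup G) ⊓ A).Normal := by
  rw [← normalizer_eq_top_iff, eq_top_iff, ← hAB]
  refine sup_le ((le_inf le_normalizer_of_normal le_normalizer).trans
    inf_normalizer_le_normalizer_inf) (le_of_forall_sylow_map_le fun q _ Q => ?_)
  obtain rfl | hqp := eq_or_ne q p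
  · calc (Q : Subgroup B).map B.subtype
        ≤ P := (Q.isPGroup'.map _).le_of_normal_sylow P
      _ ≤ centralizer (P : Set G) := hPcomm
      _ ≤ centralizer (((P : Subgroup G) ⊓ A : Subgroup G) : Set G) :=
          centralizer_le (SetLike.coe_subset_coe.2 inf_le_left)
      _ ≤ _ := centralizer_le_normalizer _
  · exact le_normalizer_of_mul_comm inf_le_left
      (IsPGroup.disjoint_of_ne p q hqp.symm _ _ P.isPGroup' (Q.isPGroup'.map _))
      (hperm q Fact.out hqp _ Q.isSylowSubgroupOf_map_subtype_s11)

end Finite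

/-- If `G = G₁G₂` with `G₁`, `G₂` msp-permutable and a Sylow `p`-subgroup `P` of `G` is
normal and abelian, then `P ⊓ Gᵢ` is normal in `G` for `i ∈ {1, 2}`. -/
theorem inf_normal_of_msp_permutable_product {G : Type u} [Group G] [Finite G]
    (G₁ G₂ : Subgroup G) (h : MspPermutable G₁ G₂)
    (hG : (G₁ : Set G) * (G₂ : Set G) = Set.univ)
    (p : ℕ) (hp : p.Prime) (P : Sylow p G) (hnorm : (P : Subgroup G).Normal)
    (habel : ∀ x ∈ (P : Subgroup G), ∀ y ∈ (P : Subgroup G), x * y = y * x) :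
    ((P : Subgroup G) ⊓ G₁).Normal ∧ ((P : Subgroup G) ⊓ G₂).Normal := by
  have := Fact.mk hp
  have hsup : G₁ ⊔ G₂ = ⊤ := sup_eq_top_of_mul_eq_univ hG
  have hPcomm : (P : Subgroup G) ≤ centralizer (P : Set G) := fun x hx =>
    mem_centralizer_iff.2 fun y hy => habel y hy x hx
  constructor
  · refine P.inf_normal_of_sup_eq_top hPcomm hsup fun q hq hqp Q hQ => ?_
    exact (h.2 p q hp hq hqp.symm _ Q (P.isSylowSubgroupOf_inf G₁) hQ).1 _ le_rfl
  · refine P.inf_normal_of_sup_eq_top hPcomm (sup_comm G₁ G₂ ▸ hsup) fun q hq hqp Q hQ => ?_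
    exact ((h.2 q p hq hp hqp Q _ hQ (P.isSylowSubgroupOf_inf G₂)).2 _ le_rfl).symm
end

section
/- Let G = P ⋊ M be a primitive soluble finite group, where M is a primitivator of G and P is a Sylow p-subgroup of G. Let A and B be subgroups of M with M = AB. If B ≤ N_G(X) for every subgroup X of P, then B is a cyclic group whose order divides p − 1. -/
/-!
Because `M` is maximal and core-free, `P` is a minimal normal subgroup of `G`. As a nontrivial
`p`-group it has nontrivial centre, so `P` is abelian; then its elements of order dividing `p` form
a nontrivial normal subgroup, so `P` has exponent `p`. Moreover `C_G(P) ∩ M` is normalized by `M`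
and centralized by `P`, hence normal in `G = PM`, hence trivial.

Every `b ∈ B` normalizes each cyclic subgroup of `P`, so it acts on `P` by `x ↦ x ^ n(x)`.
Comparing the exponents at `a`, `y` and `a * y` shows that if `b` fixes one `a ≠ 1` then it
centralizes `P`, so `b = 1`. Thus the action of `B` on `⟨a⟩ ≅ C_p` embeds `B` into
`Aut(C_p) ≅ (ZMod p)ˣ`, which is cyclic of order `p - 1`.
-/

open Subgroup Pointwise

universe u

section

variable {G : Type*} [Group G] {p : ℕ}

theorem zpow_eq_one_of_pow_eq_one_of_dvd {y : G} (hy : y ^ p = 1) {k : ℤ} (hk : (p : ℤ) ∣ k) :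
    y ^ k = 1 := by
  obtain ⟨c, rfl⟩ := hk
  rw [zpow_mul, zpow_natCast, hy, one_zpow]

theorem mem_zpowers_zpow_of_pow_eq_one [hp : Fact p.Prime] {y : G} (hy : y ^ p = 1) {k : ℤ}
    (hk : ¬(p : ℤ) ∣ k) : y ∈ zpowers (y ^ k) := by
  rw [mem_zpowers_zpow_iff]
  have hkp : Nat.Coprime k.natAbs p :=
    ((Nat.Prime.coprime_iff_not_dvd hp.out).mpr fun h => hk (Int.natCast_dvd.mpr h)).symm
  simpa [Int.gcd] using hkp.coprime_dvd_right (orderOf_dvd_of_pow_eq_one hy)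

theorem MonoidHom.apply_eq_self_of_apply_mem_zpowers [Fact p.Prime] (σ : G →* G) {a y : G}
    (hay : Commute a y) (ha : orderOf a = p) (hy : y ^ p = 1) (hσa : σ a = a)
    (hσy : σ y ∈ zpowers y) (hσay : σ (a * y) ∈ zpowers (a * y)) : σ y = y := by
  obtain ⟨n, hn⟩ := mem_zpowers_iff.mp hσy
  obtain ⟨m, hm⟩ := mem_zpowers_iff.mp hσay
  have key : a ^ (m - 1) = y ^ (n - m) := by
    have h : a ^ m * y ^ m = a * y ^ n := by rw [← hay.mul_zpow, hm, map_mul, hσa, hn]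
    calc a ^ (m - 1) = a⁻¹ * (a ^ m * y ^ m) * (y ^ m)⁻¹ := by rw [zpow_sub_one]; group
      _ = y ^ (n - m) := by rw [h, zpow_sub]; group
  -- `key` forces either `n ≡ m ≡ 1 [ZMOD p]` or `y ∈ zpowers a`, where `σ` is the identity.
  by_cases hdvd : (p : ℤ) ∣ n - m
  · have hm1 : (p : ℤ) ∣ m - 1 := by
      rw [← ha, orderOf_dvd_iff_zpow_eq_one, key, zpow_eq_one_of_pow_eq_one_of_dvd hy hdvd]
    have hn1 : y ^ (n - 1) = 1 := by
      refine zpow_eq_one_of_pow_eq_one_of_dvd hy ?_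
      simpa only [sub_add_sub_cancel] using dvd_add hdvd hm1
    calc σ y = y ^ (n - 1) * y := by rw [← hn, zpow_sub_one, inv_mul_cancel_right]
      _ = y := by rw [hn1, one_mul]
  · obtain ⟨j, rfl⟩ : y ∈ zpowers a := by
      refine zpowers_le.mpr ?_ (mem_zpowers_zpow_of_pow_eq_one hy hdvd)
      rw [← key]
      exact zpow_mem_zpowers a _
    rw [map_zpow, hσa]

theorem isCyclic_and_card_dvd_of_le_normalizer {H B : Subgroup G} [IsCyclic H]
    (hH : (Nat.card H).Prime) (hBN : B ≤ normalizer (H : Set G)) (hBC : B ⊓ centralizer H = ⊥) :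
    IsCyclic B ∧ Nat.card B ∣ Nat.card H - 1 := by
  have := Fact.mk hH
  let f : B →* (ZMod (Nat.card H))ˣ :=
    (IsCyclic.mulAutMulEquiv H).toMonoidHom.comp (H.normalizerMonoidHom.comp (inclusion hBN))
  have hf : Function.Injective f := by
    rw [injective_iff_map_eq_one]
    intro b hb
    have hker : inclusion hBN b ∈ H.normalizerMonoidHom.ker := by simpa [f] using hb
    rw [normalizerMonoidHom_ker, mem_subgroupOf] at hker
    have hbC : (b : G) ∈ B ⊓ centralizer H := ⟨b.2, hker⟩
    rw [hBC, mem_bot] at hbC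
    exact Subtype.ext hbC
  refine ⟨isCyclic_of_injective f hf, ?_⟩
  rw [← ZMod.card_units, ← Nat.card_eq_fintype_card]
  exact card_dvd_of_injective f hf

variable {M P : Subgroup G}

theorem inf_centralizer_zpowers_le_centralizer [Fact p.Prime] (B : Subgroup G)
    (hcomm : P ≤ centralizer P) (hexp : ∀ x ∈ P, x ^ p = 1) {a : G} (haP : a ∈ P)
    (ha : orderOf a = p) (hBP : ∀ x ∈ P, B ≤ normalizer (zpowers x : Set G)) :
    B ⊓ centralizer (zpowers a) ≤ centralizer P := by
  rintro b ⟨hbB, hba⟩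
  have hconj : ∀ x ∈ P, MulAut.conj b x ∈ zpowers x := fun x hx =>
    (mem_normalizer_iff.mp (hBP x hx hbB) x).mp (mem_zpowers x)
  refine mem_centralizer_iff.mpr fun y hy => ?_
  have hσy := (MulAut.conj b).toMonoidHom.apply_eq_self_of_apply_mem_zpowers (hcomm hy a haP) ha
    (hexp y hy) ?_ (hconj y hy) (hconj _ (P.mul_mem haP hy))
  · exact (mul_inv_eq_iff_eq_mul.mp hσy).symm
  · simpa [mul_inv_eq_iff_eq_mul] using (mem_centralizer_iff.mp hba a (mem_zpowers a)).symm

theorem eq_bot_of_le_of_normalCore_eq_bot (hcore : M.normalCore = ⊥) {N : Subgroup G} [N.Normal]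
    (hNM : N ≤ M) : N = ⊥ :=
  le_bot_iff.mp (hcore ▸ normal_le_normalCore.mpr hNM)

theorem minimal_normal_of_isCoatom (hmax : IsCoatom M) (hcore : M.normalCore = ⊥) [P.Normal]
    (hPM : P ⊓ M = ⊥) (hP : P ≠ ⊥) : Minimal (fun N : Subgroup G => N.Normal ∧ N ≠ ⊥) P := by
  refine ⟨⟨inferInstance, hP⟩, fun N ⟨_, hNbot⟩ hNP => ?_⟩
  have hNM : N ⊔ M = ⊤ :=
    hmax.2 _ <| right_lt_sup.mpr fun h => hNbot (eq_bot_of_le_of_normalCore_eq_bot hcore h)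
  apply le_of_eq
  apply SetLike.coe_injective
  calc (P : Set G) = (N : Set G) * M ∩ P := by rw [← normal_mul, hNM, coe_top, Set.univ_inter]
    _ = (N : Set G) * ↑(M ⊓ P) := (mul_inf_assoc N M P hNP).symm
    _ = N := by rw [inf_comm, hPM, coe_bot, Set.singleton_one, mul_one]

theorem centralizer_inf_eq_bot_of_normalCore_eq_bot (hcore : M.normalCore = ⊥) [P.Normal]
    (hPM : P ⊔ M = ⊤) : centralizer P ⊓ M = ⊥ := by
  have : (centralizer P ⊓ M).Normal := by
    rw [← normalizer_eq_top_iff, eq_top_iff, ← hPM]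
    refine sup_le ?_ ?_
    · exact (le_centralizer_iff.mp inf_le_left).trans (centralizer_le_normalizer _)
    · exact (le_inf le_normalizer_of_normal le_normalizer).trans inf_normalizer_le_normalizer_inf
  exact eq_bot_of_le_of_normalCore_eq_bot hcore inf_le_right

variable [Finite G] [hp : Fact p.Prime]

theorem le_centralizer_of_minimal (hP : IsPGroup p P)
    (hmin : Minimal (fun N : Subgroup G => N.Normal ∧ N ≠ ⊥) P) : P ≤ centralizer P := by
  have := hmin.1.1
  have : Nontrivial P := (nontrivial_iff_ne_bot P).mpr hmin.1.2
  have := hP.center_nontrivial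
  obtain ⟨⟨⟨z, hzP⟩, hzZ⟩, hz⟩ := exists_ne (1 : center P)
  have hZ : P ⊓ centralizer P ≠ ⊥ := by
    refine ne_bot_iff_exists_ne_one.mpr ⟨⟨z, hzP, fun x hx => ?_⟩, fun h => hz ?_⟩
    · exact congrArg Subtype.val (mem_center_iff.mp hzZ ⟨x, hx⟩)
    · exact Subtype.ext (Subtype.ext (congrArg Subtype.val h : z = 1))
  exact (hmin.eq_of_le ⟨inferInstance, hZ⟩ inf_le_left).ge.trans inf_le_right

theorem pow_eq_one_of_minimal (hP : IsPGroup p P)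
    (hmin : Minimal (fun N : Subgroup G => N.Normal ∧ N ≠ ⊥) P) (hcomm : P ≤ centralizer P) :
    ∀ x ∈ P, x ^ p = 1 := by
  let Ω : Subgroup G :=
    { carrier := {x | x ∈ P ∧ x ^ p = 1}
      one_mem' := ⟨P.one_mem, one_pow p⟩
      mul_mem' := fun {x y} ⟨hx, hxp⟩ ⟨hy, hyp⟩ =>
        ⟨P.mul_mem hx hy, by rw [Commute.mul_pow (hcomm hy x hx), hxp, hyp, one_mul]⟩
      inv_mem' := fun {x} ⟨hx, hxp⟩ => ⟨P.inv_mem hx, by rw [inv_pow, hxp, inv_one]⟩ }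
  have hΩ : Ω.Normal :=
    ⟨fun x ⟨hx, hxp⟩ g => ⟨hmin.1.1.conj_mem x hx g, by rw [conj_pow, hxp]; group⟩⟩
  have : Nontrivial P := (nontrivial_iff_ne_bot P).mpr hmin.1.2
  obtain ⟨n, hn, hcard⟩ := hP.nontrivial_iff_card.mp this
  obtain ⟨x, hx⟩ := exists_prime_orderOf_dvd_card' p (hcard ▸ dvd_pow_self p hn.ne')
  rw [← orderOf_coe] at hx
  have hΩbot : Ω ≠ ⊥ := ne_bot_iff_exists_ne_one.mpr
    ⟨(⟨x, x.2, hx ▸ pow_orderOf_eq_one _⟩ : Ω),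
      fun h => hp.out.one_lt.ne' (hx ▸ orderOf_eq_one_iff.mpr (congrArg Subtype.val h))⟩
  intro y hy
  exact ((hmin.eq_of_le ⟨hΩ, hΩbot⟩ fun _ h => h.1).ge hy).2

end

theorem cyclic_of_normalizes_sylow_general {G : Type u} [Group G] [Finite G]
    (M : Subgroup G) (hmax : IsCoatom M) (hcore : M.normalCore = ⊥)
    (p : ℕ) (hp : p.Prime) (P : Subgroup G)
    (hsyl : IsSylowSubgroupOf p P ⊤) (hPnorm : P.Normal)
    (hPM1 : P ⊓ M = ⊥) (hPM2 : P ⊔ M = ⊤)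
    (B : Subgroup G) (hB : B ≤ M)
    (hnormz : ∀ X : Subgroup G, X ≤ P → B ≤ normalizer (X : Set G)) :
    IsCyclic B ∧ Nat.card B ∣ p - 1 := by
  have := Fact.mk hp
  have hPbot : P ≠ ⊥ := by
    rintro rfl
    exact hmax.1 (by simpa using hPM2)
  have hmin := minimal_normal_of_isCoatom hmax hcore hPM1 hPbot
  have hcomm := le_centralizer_of_minimal hsyl.2.1 hmin
  have hexp := pow_eq_one_of_minimal hsyl.2.1 hmin hcomm
  obtain ⟨a, haP, ha1⟩ := (nontrivial_iff_exists_ne_one P).mp ((nontrivial_iff_ne_bot P).mpr hPbot)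
  have ha : orderOf a = p := orderOf_eq_prime (hexp a haP) ha1
  have hBC : B ⊓ centralizer (zpowers a) = ⊥ := by
    refine le_bot_iff.mp <| (le_inf ?_ (inf_le_left.trans hB)).trans
      (centralizer_inf_eq_bot_of_normalCore_eq_bot hcore hPM2).le
    exact inf_centralizer_zpowers_le_centralizer B hcomm hexp haP ha
      fun x hx => hnormz _ (zpowers_le.mpr hx)
  have hcard : Nat.card (zpowers a) = p := (Nat.card_zpowers a).trans ha
  simpa only [hcard] using isCyclic_and_card_dvd_of_le_normalizer (hcard ▸ hp)
    (hnormz _ (zpowers_le.mpr haP)) hBC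

/-- Let `G = P ⋊ M` be a primitive soluble group, `M` a primitivator of `G` and `P` a
Sylow `p`-subgroup of `G`. If `M = AB` and `B` normalizes every subgroup of `P`,
then `B` is cyclic of order dividing `p - 1`. -/
theorem cyclic_of_normalizes_sylow {G : Type u} [Group G] [Finite G]
    (hsol : IsSolvable G)
    (M : Subgroup G) (hmax : IsCoatom M) (hcore : M.normalCore = ⊥)
    (p : ℕ) (hp : p.Prime) (P : Subgroup G)
    (hsyl : IsSylowSubgroupOf p P ⊤) (hPnorm : P.Normal)
    (hPM1 : P ⊓ M = ⊥) (hPM2 : P ⊔ M = ⊤)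
    (A B : Subgroup G) (hA : A ≤ M) (hB : B ≤ M)
    (hM : (A : Set G) * (B : Set G) = (M : Set G))
    (hnormz : ∀ X : Subgroup G, X ≤ P → B ≤ normalizer (X : Set G)) :
    IsCyclic B ∧ Nat.card B ∣ p - 1 :=
  cyclic_of_normalizes_sylow_general M hmax hcore p hp P hsyl hPnorm hPM1 hPM2 B hB hnormz
end

section
/- Let G = P ⋊ M be a primitive soluble finite group, where M is a primitivator of G and P is a Sylow p-subgroup of G. Let A and B be subgroups of M with M = AB. If B ≤ N_G(X) for every subgroup X of P, then [A, B] = 1, i.e., every element of A commutes with every element of B. -/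
open Subgroup Pointwise

universe u

/-!
`P` is a minimal normal subgroup of `G` (any nontrivial normal `N ≤ P` supplements the maximal
subgroup `M`, and `P ∩ M = 1` forces `N = P`), so solubility makes `P` abelian and the elements of
order dividing `p` form a nontrivial normal subgroup, which must be all of `P`. Thus `P` is an
`𝔽_p`-vector space on which each `b ∈ B` acts with every vector an eigenvector, i.e. as a scalar
`x ↦ x ^ k`. Such a power map commutes with conjugation by `a`, so `[a, b]` centralizes `P`; but
`C_G(P) ∩ M` is normalized by `P` and `M`, hence normal in `G` and contained in the core of `M`.
-/

open scoped IsMulCommutative commutatorElement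

theorem IsPGroup.exists_orderOf_eq_prime {H : Type*} [Group H] [Nontrivial H] {p : ℕ}
    [hp : Fact p.Prime] (hH : IsPGroup p H) : ∃ y : H, orderOf y = p := by
  obtain ⟨x, hx⟩ := exists_ne (1 : H)
  have hdvd := hH.dvd_orderOf hx
  have hpos := (hH.isOfFinOrder hp.out.ne_zero x).orderOf_pos
  refine ⟨x ^ (orderOf x / p), ?_⟩
  rw [orderOf_pow_of_dvd (Nat.div_pos (Nat.le_of_dvd hpos hdvd) hp.out.pos).ne'
    (Nat.div_dvd_of_dvd hdvd), Nat.div_div_self hdvd hpos.ne']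

theorem MonoidHom.exists_pow_of_forall_mem_zpowers {H : Type*} [CommGroup H] {p : ℕ}
    [Fact p.Prime] (hexp : ∀ x : H, x ^ p = 1) (f : H →* H) (hf : ∀ x, f x ∈ zpowers x) :
    ∃ k : ℕ, ∀ x, f x = x ^ k := by
  -- `have`, not `let`: unfolding `zmodModule` gets stuck on a match on `p`, blocking `Module.Free`.
  have : Module (ZMod p) (Additive H) := AddCommGroup.zmodModule hexp
  obtain ⟨c, hc⟩ := LinearMap.exists_eq_smul_id_of_forall_notLinearIndependent
    (f := f.toAdditive.toZModLinearMap p) fun v hv => by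
      obtain ⟨k, hk⟩ := mem_zpowers_iff.mp (hf v.toMul)
      have := LinearIndependent.pair_iff.mp hv (k : ZMod p) (-1) (by
        simp [Int.cast_smul_eq_zsmul, ← hk, ofMul_zpow])
      exact one_ne_zero (neg_eq_zero.mp this.2)
  refine ⟨c.val, fun x => ?_⟩
  have hx := LinearMap.congr_fun hc (Additive.ofMul x)
  rw [← ZMod.natCast_zmod_val c, Nat.cast_smul_eq_nsmul] at hx
  exact congrArg Additive.toMul hx

namespace Subgroup

variable {G : Type*} [Group G]

theorem eq_of_le_of_isCoatom_of_inf_eq_bot {M P N : Subgroup G} [N.Normal] (hmax : IsCoatom M)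
    (hPM : P ⊓ M = ⊥) (hNP : N ≤ P) (hN : N ≠ ⊥) : N = P := by
  have hNM : N ⊔ M = ⊤ :=
    hmax.2 _ (right_lt_sup.mpr fun h => hN (le_bot_iff.mp (hPM ▸ le_inf hNP h)))
  refine le_antisymm hNP fun x hx => ?_
  obtain ⟨n, hn, m, hm, rfl⟩ := mem_sup_of_normal_left.mp (hNM ▸ mem_top x : x ∈ N ⊔ M)
  have hm1 : m ∈ P ⊓ M := ⟨(mul_mem_cancel_left (hNP hn)).mp hx, hm⟩
  rw [hPM, mem_bot] at hm1
  simpa [hm1] using hn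

theorem isMulCommutative_of_minimal_normal [Group.IsSolvable G] {P : Subgroup G} [P.Normal]
    (hmin : ∀ N : Subgroup G, N.Normal → N ≤ P → N ≠ ⊥ → N = P) : IsMulCommutative P := by
  rw [← commutator_self_eq_bot_iff]
  by_contra h
  have hP : P ≠ ⊥ := by rintro rfl; exact h (commutator_bot_left ⊥)
  exact (Group.IsSolvable.commutator_lt_of_ne_bot hP).ne
    (hmin _ inferInstance (commutator_le_left P P) h)

theorem pow_eq_one_of_minimal_normal {p : ℕ} [Fact p.Prime] {P : Subgroup G} [P.Normal]
    [IsMulCommutative P] (hP : IsPGroup p P)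
    (hmin : ∀ N : Subgroup G, N.Normal → N ≤ P → N ≠ ⊥ → N = P) {x : G} (hx : x ∈ P) :
    x ^ p = 1 := by
  rcases eq_or_ne P ⊥ with rfl | hPbot
  · rw [mem_bot.mp hx, one_pow]
  let S : Subgroup G :=
    { carrier := {g | g ∈ P ∧ g ^ p = 1}
      one_mem' := ⟨one_mem P, one_pow p⟩
      mul_mem' := fun {a b} ha hb => ⟨mul_mem ha.1 hb.1, by
        rw [Commute.mul_pow (setLike_mul_comm ha.1 hb.1), ha.2, hb.2, one_mul]⟩
      inv_mem' := fun {a} ha => ⟨inv_mem ha.1, by rw [inv_pow, ha.2, inv_one]⟩ }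
  have hS : S.Normal := ⟨fun a ha g => ⟨‹P.Normal›.conj_mem a ha.1 g, by
    rw [conj_pow, ha.2, mul_one, mul_inv_cancel]⟩⟩
  have := (nontrivial_iff_ne_bot P).mpr hPbot
  obtain ⟨y, hy⟩ := hP.exists_orderOf_eq_prime
  have hyS : (y : G) ∈ S := ⟨y.2, by rw [← hy, ← orderOf_coe]; exact pow_orderOf_eq_one _⟩
  have hy1 : (y : G) ≠ 1 := fun h => (Fact.out : p.Prime).ne_one (by
    rw [← hy, ← orderOf_coe, h, orderOf_one])
  have hSP : S = P := hmin S hS (fun g hg => hg.1) fun h => hy1 (mem_bot.mp (h ▸ hyS))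
  exact (hSP ▸ hx : x ∈ S).2

theorem centralizer_inf_eq_bot_of_normalCore_eq_bot {M P : Subgroup G} [P.Normal] (hPM : P ⊔ M = ⊤)
    (hcore : M.normalCore = ⊥) : centralizer P ⊓ M = ⊥ := by
  have : (centralizer P ⊓ M).Normal := by
    rw [← normalizer_eq_top_iff, ← top_le_iff, ← hPM]
    refine sup_le ?_ ?_
    · exact (le_centralizer_iff.mpr inf_le_left).trans (centralizer_le_normalizer _)
    · exact (le_inf le_normalizer_of_normal le_normalizer).trans inf_normalizer_le_normalizer_inf
  exact le_bot_iff.mp (hcore ▸ normal_le_normalCore.mpr inf_le_right)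

theorem exists_pow_of_forall_conj_mem_zpowers {p : ℕ} [Fact p.Prime] {P : Subgroup G}
    [P.Normal] [IsMulCommutative P] (hexp : ∀ x ∈ P, x ^ p = 1) {b : G}
    (hb : ∀ x ∈ P, b * x * b⁻¹ ∈ zpowers x) : ∃ k : ℕ, ∀ x ∈ P, b * x * b⁻¹ = x ^ k := by
  obtain ⟨k, hk⟩ := (MulAut.conjNormal b : MulAut P).toMonoidHom.exists_pow_of_forall_mem_zpowers
    (fun x => Subtype.ext (hexp x x.2)) fun x => by
      obtain ⟨n, hn⟩ := mem_zpowers_iff.mp (hb x x.2)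
      exact ⟨n, Subtype.ext (by simpa [MulAut.conjNormal_apply] using hn)⟩
  exact ⟨k, fun x hx => by
    simpa [MulAut.conjNormal_apply] using congrArg Subtype.val (hk ⟨x, hx⟩)⟩

theorem commutatorElement_mem_centralizer_of_conj_eq_pow {P : Subgroup G} [P.Normal] (a : G)
    {b : G} {k : ℕ} (hb : ∀ x ∈ P, b * x * b⁻¹ = x ^ k) : ⁅a, b⁆ ∈ centralizer P := by
  rw [mem_centralizer_iff]
  intro x hx
  set y := a⁻¹ * (b⁻¹ * x * b) * a
  have hy : b * y * b⁻¹ = y ^ k := hb y (‹P.Normal›.conj_mem' _ (‹P.Normal›.conj_mem' x hx b) a)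
  have hconj : ⁅a, b⁆ * x * ⁅a, b⁆⁻¹ = x := calc
    _ = a * (b * y * b⁻¹) * a⁻¹ := by simp only [y, commutatorElement_def]; group
    _ = (a * y * a⁻¹) ^ k := by rw [hy, conj_pow]
    _ = (b⁻¹ * x * b⁻¹⁻¹) ^ k := by simp only [y]; group
    _ = x := by rw [conj_pow, ← hb x hx]; group
  exact (mul_inv_eq_iff_eq_mul.mp hconj).symm

end Subgroup

theorem commutator_eq_bot_of_normalizes_sylow_general {G : Type u} [Group G]
    (hsol : IsSolvable G)
    (M : Subgroup G) (hmax : IsCoatom M) (hcore : M.normalCore = ⊥)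
    (p : ℕ) (hp : p.Prime) (P : Subgroup G)
    (hsyl : IsSylowSubgroupOf p P ⊤) (hPnorm : P.Normal)
    (hPM1 : P ⊓ M = ⊥) (hPM2 : P ⊔ M = ⊤)
    (A B : Subgroup G) (hA : A ≤ M) (hB : B ≤ M)
    (hnormz : ∀ X : Subgroup G, X ≤ P → B ≤ normalizer (X : Set G)) :
    ⁅A, B⁆ = (⊥ : Subgroup G) := by
  have := Fact.mk hp
  have : Group.IsSolvable G := hsol
  have hmin (N : Subgroup G) (_ : N.Normal) : N ≤ P → N ≠ ⊥ → N = P :=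
    eq_of_le_of_isCoatom_of_inf_eq_bot hmax hPM1
  have : IsMulCommutative P := isMulCommutative_of_minimal_normal hmin
  have hexp (x : G) : x ∈ P → x ^ p = 1 := pow_eq_one_of_minimal_normal hsyl.2.1 hmin
  rw [eq_bot_iff, commutator_le]
  intro a ha b hb
  obtain ⟨k, hk⟩ := exists_pow_of_forall_conj_mem_zpowers hexp fun x hx =>
    (mem_normalizer_iff.mp (hnormz _ (zpowers_le.mpr hx) hb) x).mp (mem_zpowers x)
  have hab : ⁅a, b⁆ ∈ centralizer P ⊓ M :=
    ⟨commutatorElement_mem_centralizer_of_conj_eq_pow a hk,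
     M.mul_mem (M.mul_mem (M.mul_mem (hA ha) (hB hb)) (M.inv_mem (hA ha))) (M.inv_mem (hB hb))⟩
  rwa [centralizer_inf_eq_bot_of_normalCore_eq_bot hPM2 hcore] at hab

/-- Let `G = P ⋊ M` be a primitive soluble group, `M` a primitivator of `G` and `P` a
Sylow `p`-subgroup of `G`. If `M = AB` and `B` normalizes every subgroup of `P`,
then `[A, B] = 1`. -/
theorem commutator_eq_bot_of_normalizes_sylow {G : Type u} [Group G] [Finite G]
    (hsol : IsSolvable G)
    (M : Subgroup G) (hmax : IsCoatom M) (hcore : M.normalCore = ⊥)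
    (p : ℕ) (hp : p.Prime) (P : Subgroup G)
    (hsyl : IsSylowSubgroupOf p P ⊤) (hPnorm : P.Normal)
    (hPM1 : P ⊓ M = ⊥) (hPM2 : P ⊔ M = ⊤)
    (A B : Subgroup G) (hA : A ≤ M) (hB : B ≤ M)
    (hM : (A : Set G) * (B : Set G) = (M : Set G))
    (hnormz : ∀ X : Subgroup G, X ≤ P → B ≤ normalizer (X : Set G)) :
    ⁅A, B⁆ = (⊥ : Subgroup G) :=
  commutator_eq_bot_of_normalizes_sylow_general hsol M hmax hcore p hp P hsyl hPnorm hPM1 hPM2 A B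
    hA hB hnormz
end
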